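/- arXiv:0803.2803 — 3 statements merged into one kernel-verified Lean document; each statement's English description precedes it below -/
import Mathlib

section
/- Let (F_n) be the Fibonacci numbers. For every integer n ≥ 1, F_n = Σ_{k∈ℤ} (−1)^k · C(n, ⌊(n−1−5k)/2⌋), where the sum runs over all integers k (only finitely many terms are nonzero). -/
/-!
With `S_c(m) = Σ_k (-1)^k C(m, ⌊(m + c - 5k)/2⌋)`, Pascal's rule gives
`S_c(m + 1) = S_{c+1}(m) + S_{c-1}(m)`. The substitution `k ↦ -k` together with
`C(m, j) = C(m, m - j)` gives `S_{1-c} = S_c`, and `k ↦ k - 1` gives `S_{c+5} = -S_c`; hence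
`S_{-2} = S_3 = -S_{-2}` vanishes. So `S_1 = S_0` and `S_{-1}(m + 1) = S_0(m)`, i.e.
`S_0(m + 1) = S_0(m) + S_0(m - 1)`, and the initial values give `S_{-1}(m) = F_m`.
-/

/-- Binomial coefficient `C(m, j)` with integer lower index `j`,
equal to `0` when `j < 0` or `j > m`. -/
def ichoose (m : ℕ) (j : ℤ) : ℚ :=
  if j < 0 then 0 else (m.choose j.toNat : ℚ)

lemma ichoose_natCast (m i : ℕ) : ichoose m i = m.choose i := by
  simp [ichoose]

lemma ichoose_of_neg {m : ℕ} {j : ℤ} (h : j < 0) : ichoose m j = 0 := by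
  simp [ichoose, h]

lemma ichoose_of_lt {m : ℕ} {j : ℤ} (h : (m : ℤ) < j) : ichoose m j = 0 := by
  rw [ichoose, if_neg (by omega), Nat.choose_eq_zero_of_lt (by omega), Nat.cast_zero]

lemma ichoose_succ (m : ℕ) (j : ℤ) : ichoose (m + 1) j = ichoose m j + ichoose m (j - 1) := by
  rcases lt_trichotomy j 0 with h | rfl | h
  · simp [ichoose_of_neg, h, show j - 1 < 0 by omega]
  · simp [ichoose]
  · obtain ⟨i, rfl⟩ : ∃ i : ℕ, j = (i + 1 : ℕ) := ⟨j.toNat - 1, by omega⟩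
    rw [Nat.cast_succ, add_sub_cancel_right, ← Nat.cast_succ, ichoose_natCast, ichoose_natCast,
      ichoose_natCast, Nat.choose_succ_succ', Nat.cast_add, add_comm]

lemma ichoose_symm (m : ℕ) (j : ℤ) : ichoose m (m - j) = ichoose m j := by
  rcases lt_or_ge j 0 with h | h
  · rw [ichoose_of_neg h, ichoose_of_lt (by omega)]
  rcases le_or_gt j m with h' | h'
  · lift j to ℕ using h
    rw [← Nat.cast_sub (by omega), ichoose_natCast, ichoose_natCast, Nat.choose_symm (by omega)]
  · rw [ichoose_of_lt h', ichoose_of_neg (by omega)]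

lemma neg_one_zpow_neg (k : ℤ) : (-1 : ℚ) ^ (-k) = (-1) ^ k := by
  rw [zpow_neg, ← inv_zpow, inv_neg_one]

lemma neg_one_zpow_sub_one (k : ℤ) : (-1 : ℚ) ^ (k - 1) = -(-1) ^ k := by
  rw [zpow_sub_one₀ (by norm_num), inv_neg_one, mul_neg_one]

lemma hasFiniteSupport_mul_ichoose_div_two (f : ℤ → ℚ) (m : ℕ) (a : ℤ) :
    Function.HasFiniteSupport fun k : ℤ => f k * ichoose m ((a - 5 * k) / 2) := by
  refine (Set.finite_Icc ((a - 2 * m - 1) / 5) (a / 5)).subset fun k hk => ?_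
  have hk : ichoose m ((a - 5 * k) / 2) ≠ 0 := right_ne_zero_of_mul hk
  have h0 : ¬ (a - 5 * k) / 2 < 0 := fun h => hk (ichoose_of_neg h)
  have hm : ¬ (m : ℤ) < (a - 5 * k) / 2 := fun h => hk (ichoose_of_lt h)
  constructor <;> omega

/-- `ℤ`-division by `2` rounds down, so this is `Σ_k (-1)^k C(m, ⌊(m + c - 5k)/2⌋)`. -/
noncomputable def andrewsSum (c : ℤ) (m : ℕ) : ℚ :=
  ∑ᶠ k : ℤ, (-1 : ℚ) ^ k * ichoose m ((m + c - 5 * k) / 2)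

lemma andrewsSum_succ (c : ℤ) (m : ℕ) :
    andrewsSum c (m + 1) = andrewsSum (c + 1) m + andrewsSum (c - 1) m := by
  rw [andrewsSum, andrewsSum, andrewsSum, ← finsum_add_distrib
    (hasFiniteSupport_mul_ichoose_div_two _ _ _) (hasFiniteSupport_mul_ichoose_div_two _ _ _)]
  refine finsum_congr fun k => ?_
  rw [← mul_add, Nat.cast_succ, ichoose_succ,
    show ((m : ℤ) + 1 + c - 5 * k) / 2 = (m + (c + 1) - 5 * k) / 2 by ring_nf,
    show ((m : ℤ) + (c + 1) - 5 * k) / 2 - 1 = (m + (c - 1) - 5 * k) / 2 by omega]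

/-- The shift of `c` to `1 - c` comes from `m - ⌊x/2⌋ = ⌊(2m + 1 - x)/2⌋`. -/
lemma andrewsSum_one_sub (c : ℤ) (m : ℕ) : andrewsSum (1 - c) m = andrewsSum c m := by
  refine finsum_eq_of_bijective (fun k => -k) neg_involutive.bijective fun k => ?_
  rw [neg_one_zpow_neg, ← ichoose_symm m ((m + c - 5 * -k) / 2)]
  congr 2
  omega

lemma andrewsSum_add_five (c : ℤ) (m : ℕ) : andrewsSum (c + 5) m = -andrewsSum c m := by
  rw [andrewsSum, andrewsSum, ← finsum_neg_distrib]
  refine finsum_eq_of_bijective (fun k => k - 1) (Equiv.subRight 1).bijective fun k => ?_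
  rw [neg_one_zpow_sub_one, neg_mul, neg_neg,
    show (m : ℤ) + (c + 5) - 5 * k = m + c - 5 * (k - 1) by ring]

lemma andrewsSum_neg_two (m : ℕ) : andrewsSum (-2) m = 0 := by
  have h := andrewsSum_add_five (-2) m
  rw [show (-2 : ℤ) + 5 = 1 - (-2) by norm_num, andrewsSum_one_sub] at h
  linarith

lemma andrewsSum_zero_zero : andrewsSum 0 0 = 1 := by
  rw [andrewsSum, finsum_eq_single _ 0 fun k hk => ?_]
  · simp [ichoose]
  · rcases lt_or_gt_of_ne hk with h | h
    · rw [ichoose_of_lt (by omega), mul_zero]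
    · rw [ichoose_of_neg (by omega), mul_zero]

lemma andrewsSum_neg_one_zero : andrewsSum (-1) 0 = 0 := by
  refine finsum_eq_zero_of_forall_eq_zero fun k => ?_
  rcases lt_or_ge k 0 with h | h
  · rw [ichoose_of_lt (by omega), mul_zero]
  · rw [ichoose_of_neg (by omega), mul_zero]

lemma andrewsSum_zero_and_neg_one (m : ℕ) :
    andrewsSum 0 m = Nat.fib (m + 1) ∧ andrewsSum (-1) m = Nat.fib m := by
  induction m with
  | zero => simp [andrewsSum_zero_zero, andrewsSum_neg_one_zero]
  | succ m ih =>
    have h1 : andrewsSum 1 m = andrewsSum 0 m := by simpa using andrewsSum_one_sub 0 m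
    rw [andrewsSum_succ, andrewsSum_succ, zero_add, zero_sub, h1, neg_add_cancel,
      show (-1 : ℤ) - 1 = -2 by norm_num, andrewsSum_neg_two, ih.1, ih.2, Nat.fib_add_two]
    push_cast
    constructor <;> ring

theorem fib_eq_finsum_choose_floor'_general (n : ℕ) :
    (Nat.fib n : ℚ) =
      ∑ᶠ k : ℤ, (-1 : ℚ) ^ k * ichoose n ⌊((n : ℚ) - 1 - 5 * (k : ℚ)) / 2⌋ := by
  rw [← (andrewsSum_zero_and_neg_one n).2, andrewsSum]
  refine finsum_congr fun k => ?_
  have hfloor : ((n : ℚ) - 1 - 5 * k) / 2 = ((n + -1 - 5 * k : ℤ) : ℚ) / ((2 : ℕ) : ℚ) := by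
    push_cast
    ring
  rw [hfloor, Rat.floor_intCast_div_natCast, Nat.cast_ofNat]

/-- Andrews' identity: for `n ≥ 1`,
`F_n = Σ_{k∈ℤ} (−1)^k · C(n, ⌊(n−1−5k)/2⌋)`. -/
theorem fib_eq_finsum_choose_floor' (n : ℕ) (hn : 1 ≤ n) :
    (Nat.fib n : ℚ) =
      ∑ᶠ k : ℤ, (-1 : ℚ) ^ k * ichoose n ⌊((n : ℚ) - 1 - 5 * (k : ℚ)) / 2⌋ :=
  fib_eq_finsum_choose_floor'_general n
end

section
/- Let d(t), h(t), A(t) be formal power series over ℚ with h(0) ≠ 0, d(0) ≠ 0, A(0) ≠ 0 and h(t) = A(t·h(t)) (so A is the generating function of the A-sequence of the proper Riordan array d_{n,k} = [t^n] d(t)·(t·h(t))^k). Fix integers p ≥ 2 and r ≥ 0 and define d̃_{n,k} = d_{pn+r, (p−1)n+r+k} for n, k ≥ 0. Then {d̃_{n,k}} is a proper Riordan array whose A-sequence has generating function (A(t))^p; that is, writing (A(t))^p = Σ_{k≥0} b_k t^k, one has d̃_{n+1,k+1} = Σ_{j≥0} b_j · d̃_{n,k+j} for all n, k ≥ 0,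 and consequently there exist formal power series d̃(t), h̃(t) over ℚ with h̃(0) ≠ 0, h̃(t) = (A(t·h̃(t)))^p, and d̃_{n,k} = [t^n] d̃(t)·(t·h̃(t))^k for all n, k ≥ 0. -/
/-- Composition `f(w(t))` of formal power series over `ℚ`, intended for `w` with zero
constant term: the coefficient of `t^n` is `∑_{k=0}^{n} f_k · [t^n] w(t)^k`. -/
noncomputable def psComp (f w : PowerSeries ℚ) : PowerSeries ℚ :=
  PowerSeries.mk fun n =>
    ∑ k ∈ Finset.range (n + 1), PowerSeries.coeff k f * PowerSeries.coeff n (w ^ k)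

/-!
Put `w = t·h`. Since `h = A(w)`, we have `w^(L+p) = t^p · w^L · A(w)^p`, and reading off the
coefficient of `t^(M+p)` gives `d_{M+p,L+p} = ∑ⱼ bⱼ d_{M,L+j}` where `A^p = ∑ bⱼ tʲ`. With
`M = pn+r` and `L = (p-1)n+r+k` this is the recurrence for `d̃`.

A lower triangular array satisfying the recurrence of a series `B` is the Riordan array
`(d̃(t), h̃(t))` with `d̃` its first column, as soon as `h̃ = B(t·h̃)`: both arrays obey the same
recurrence and agree on the first column. Such an `h̃` exists for `B = A^p` because `t·h̃` is the
compositional inverse of `t / B(t)`.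
-/

open PowerSeries Finset

theorem finsum_eq_sum_range_of_eq_zero {M : Type*} [AddCommMonoid M] {f : ℕ → M} {N : ℕ}
    (hf : ∀ j, N < j → f j = 0) : ∑ᶠ j, f j = ∑ j ∈ range (N + 1), f j :=
  finsum_eq_sum_of_support_subset f fun j hj => by
    by_contra hjN
    simp only [coe_range, Set.mem_Iio, not_lt] at hjN
    exact hj (hf j (by omega))

section CommSemiring

variable {R : Type*} [CommSemiring R]

theorem coeff_mul_pow_eq_zero_of_lt (u : R⟦X⟧) {w : R⟦X⟧} (hw : X ∣ w) {n k : ℕ}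
    (h : n < k) : coeff n (u * w ^ k) = 0 :=
  X_pow_dvd_iff.mp ((pow_dvd_pow_of_dvd hw k).mul_left u) n h

noncomputable def riordan (d h : R⟦X⟧) (n k : ℕ) : R := coeff n (d * (X * h) ^ k)

theorem riordan_eq_zero_of_lt (d h : R⟦X⟧) {n k : ℕ} (hnk : n < k) : riordan d h n k = 0 :=
  coeff_mul_pow_eq_zero_of_lt d (dvd_mul_right X h) hnk

end CommSemiring

theorem coeff_psComp_eq_sum_range (f : ℚ⟦X⟧) {w : ℚ⟦X⟧} (hw : X ∣ w) {n N : ℕ} (hn : n < N) :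
    coeff n (psComp f w) = ∑ k ∈ range N, coeff k f * coeff n (w ^ k) := by
  rw [psComp, coeff_mk]
  refine sum_subset (range_subset_range.mpr hn) fun k _ hk => ?_
  rw [mem_range, not_lt] at hk
  exact mul_eq_zero_of_right _ (by simpa using coeff_mul_pow_eq_zero_of_lt 1 hw hk)

theorem psComp_eq_subst (f : ℚ⟦X⟧) {w : ℚ⟦X⟧} (hw : X ∣ w) : psComp f w = f.subst w := by
  ext n
  rw [coeff_subst' (HasSubst.of_constantCoeff_zero' (X_dvd_iff.mp hw)),
    coeff_psComp_eq_sum_range f hw n.lt_succ_self, finsum_eq_sum_range_of_eq_zero]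
  · rfl
  · exact fun k hk => mul_eq_zero_of_right _ (by simpa using coeff_mul_pow_eq_zero_of_lt 1 hw hk)

theorem constantCoeff_psComp (f : ℚ⟦X⟧) {w : ℚ⟦X⟧} (hw : X ∣ w) :
    constantCoeff (psComp f w) = constantCoeff f := by
  rw [← coeff_zero_eq_constantCoeff_apply, coeff_psComp_eq_sum_range f hw zero_lt_one]
  simp

theorem psComp_pow (f : ℚ⟦X⟧) {w : ℚ⟦X⟧} (hw : X ∣ w) (q : ℕ) :
    psComp (f ^ q) w = psComp f w ^ q := by
  rw [psComp_eq_subst _ hw, psComp_eq_subst _ hw,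
    subst_pow (HasSubst.of_constantCoeff_zero' (X_dvd_iff.mp hw))]

theorem coeff_mul_psComp (u B : ℚ⟦X⟧) {w : ℚ⟦X⟧} (hw : X ∣ w) (m : ℕ) :
    coeff m (u * psComp B w) = ∑ j ∈ range (m + 1), coeff j B * coeff m (u * w ^ j) := by
  have hB : ∀ l ∈ antidiagonal m, coeff l.2 (psComp B w) =
      ∑ j ∈ range (m + 1), coeff j B * coeff l.2 (w ^ j) := fun l hl =>
    coeff_psComp_eq_sum_range B hw (Nat.antidiagonal.snd_lt hl)
  simp_rw [coeff_mul, sum_congr rfl fun l hl => congrArg (coeff l.1 u * ·) (hB l hl), mul_sum]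
  rw [sum_comm]
  exact sum_congr rfl fun j _ => sum_congr rfl fun l _ => by ring

theorem exists_eq_psComp_X_mul (B : ℚ⟦X⟧) (hB : constantCoeff B ≠ 0) :
    ∃ g : ℚ⟦X⟧, g = psComp B (X * g) := by
  set P : ℚ⟦X⟧ := X * B⁻¹
  have hP : constantCoeff P = 0 := by simp [P]
  have hP' : IsUnit (coeff 1 P) := by simpa [P, coeff_succ_X_mul] using hB
  set Q := P.substInvOfIsUnit hP'
  have hQ : HasSubst Q := HasSubst.substInvOfIsUnit P hP'
  have hXQ : X ∣ Q := X_dvd_iff.mpr (constantCoeff_substInvOfIsUnit P hP')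
  have hQB : Q = X * B.subst Q := by
    have hPQ : Q * (B⁻¹).subst Q = X := by
      have := subst_substInvOfIsUnit_right P hP hP'
      rwa [subst_mul hQ, subst_X hQ] at this
    calc Q = Q * ((B⁻¹).subst Q * B.subst Q) := by
          rw [← subst_mul hQ, PowerSeries.inv_mul_cancel B hB, ← coe_substAlgHom hQ, map_one,
            mul_one]
      _ = X * B.subst Q := by rw [← mul_assoc, hPQ]
  exact ⟨B.subst Q, by rw [← hQB, psComp_eq_subst B hXQ]⟩

theorem riordan_add_add_eq_sum {d g B : ℚ⟦X⟧} (hg : g = psComp B (X * g)) (q L M : ℕ) :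
    riordan d g (M + q) (L + q) =
      ∑ j ∈ range (M + 1), coeff j (B ^ q) * riordan d g M (L + j) := by
  have hXg : X ∣ X * g := dvd_mul_right X g
  have hsplit : d * (X * g) ^ (L + q) = d * (X * g) ^ L * psComp (B ^ q) (X * g) * X ^ q := by
    rw [psComp_pow B hXg, ← hg]
    ring
  rw [riordan, hsplit, coeff_mul_X_pow, coeff_mul_psComp _ _ hXg]
  simp only [riordan, pow_add, mul_assoc]

theorem eq_riordan_of_recurrence {B g : ℚ⟦X⟧} (hg : g = psComp B (X * g)) {T : ℕ → ℕ → ℚ}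
    (hT0 : ∀ n k, n < k → T n k = 0)
    (hT : ∀ n k, T (n + 1) (k + 1) = ∑ᶠ j, coeff j B * T n (k + j)) (n k : ℕ) :
    T n k = riordan (mk fun n => T n 0) g n k := by
  induction n generalizing k with
  | zero =>
    rcases k with _ | k
    · simp [riordan]
    · rw [hT0 0 (k + 1) k.succ_pos, riordan_eq_zero_of_lt _ _ k.succ_pos]
  | succ n ih =>
    rcases k with _ | k
    · simp [riordan]
    · have hT_sum : ∑ᶠ j, coeff j B * T n (k + j) =
          ∑ j ∈ range (n + 1), coeff j B * T n (k + j) :=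
        finsum_eq_sum_range_of_eq_zero fun j hj => by rw [hT0 n (k + j) (by omega), mul_zero]
      rw [hT, hT_sum, riordan_add_add_eq_sum hg 1 k n, pow_one]
      exact sum_congr rfl fun j _ => by rw [ih]

-- The array `d_{pn+r, (p-1)n+r+k}` for `p = q + 1`, free of the truncated subtraction `p - 1`.
noncomputable def riordanExtract (d h : ℚ⟦X⟧) (q r n k : ℕ) : ℚ :=
  riordan d h (q * n + r + n) (q * n + r + k)

theorem riordanExtract_eq_zero_of_lt (d h : ℚ⟦X⟧) (q r : ℕ) {n k : ℕ} (hnk : n < k) :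
    riordanExtract d h q r n k = 0 :=
  riordan_eq_zero_of_lt d h (by omega)

theorem riordanExtract_succ_succ {d h A : ℚ⟦X⟧} (hhA : h = psComp A (X * h)) (q r n k : ℕ) :
    riordanExtract d h q r (n + 1) (k + 1) =
      ∑ᶠ j, coeff j (A ^ (q + 1)) * riordanExtract d h q r n (k + j) := by
  rw [finsum_eq_sum_range_of_eq_zero (N := q * n + r + n) fun j hj => by
    rw [riordanExtract_eq_zero_of_lt d h q r (by omega), mul_zero]]
  calc riordanExtract d h q r (n + 1) (k + 1)
      = riordan d h (q * n + r + n + (q + 1)) (q * n + r + k + (q + 1)) := by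
        rw [riordanExtract]
        congr 1 <;> ring
    _ = _ := by
        rw [riordan_add_add_eq_sum hhA]
        exact sum_congr rfl fun j _ => by rw [riordanExtract, add_assoc (q * n + r) k j]

theorem riordan_array_extraction_general (d h A : PowerSeries ℚ)
    (hA0 : PowerSeries.constantCoeff A ≠ 0)
    (hhA : h = psComp A (PowerSeries.X * h))
    (p r : ℕ) (hp : 2 ≤ p)
    (dt : ℕ → ℕ → ℚ)
    (hdt : ∀ n k, dt n k =
      PowerSeries.coeff (p * n + r)
        (d * (PowerSeries.X * h) ^ ((p - 1) * n + r + k))) :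
    (∀ n k, dt (n + 1) (k + 1) = ∑ᶠ j : ℕ, PowerSeries.coeff j (A ^ p) * dt n (k + j)) ∧
      ∃ dts hts : PowerSeries ℚ, PowerSeries.constantCoeff hts ≠ 0 ∧
        hts = (psComp A (PowerSeries.X * hts)) ^ p ∧
        ∀ n k, dt n k = PowerSeries.coeff n (dts * (PowerSeries.X * hts) ^ k) := by
  obtain ⟨q, rfl⟩ : ∃ q, p = q + 1 := ⟨p - 1, by omega⟩
  obtain rfl : dt = riordanExtract d h q r := by
    ext n k
    rw [hdt, riordanExtract, riordan, Nat.add_sub_cancel]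
    ring_nf
  have hA0' : constantCoeff (A ^ (q + 1)) ≠ 0 := by
    rw [map_pow]
    exact pow_ne_zero _ hA0
  obtain ⟨g, hg⟩ := exists_eq_psComp_X_mul (A ^ (q + 1)) hA0'
  have hXg : X ∣ X * g := dvd_mul_right X g
  have hg' : g = psComp A (X * g) ^ (q + 1) := by rwa [← psComp_pow A hXg]
  refine ⟨riordanExtract_succ_succ hhA q r, mk fun n => riordanExtract d h q r n 0, g, ?_, hg',
    eq_riordan_of_recurrence hg (fun n k => riordanExtract_eq_zero_of_lt d h q r)
      (riordanExtract_succ_succ hhA q r)⟩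
  rwa [hg, constantCoeff_psComp _ hXg]

/-- Extracting rows from a proper Riordan array: if `d_{n,k} = [t^n] d(t)·(t·h(t))^k` is a
proper Riordan array with `A`-sequence generating function `A(t)` (i.e. `h(t) = A(t·h(t))`),
then for `p ≥ 2`, `r ≥ 0`, the array `d̃_{n,k} = d_{pn+r,(p−1)n+r+k}` satisfies the
recurrence given by the coefficients of `A(t)^p`, and it is a proper Riordan array whose
`h`-function satisfies `h̃(t) = A(t·h̃(t))^p`. -/
theorem riordan_array_extraction (d h A : PowerSeries ℚ)
    (hh0 : PowerSeries.constantCoeff h ≠ 0)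
    (hd0 : PowerSeries.constantCoeff d ≠ 0)
    (hA0 : PowerSeries.constantCoeff A ≠ 0)
    (hhA : h = psComp A (PowerSeries.X * h))
    (p r : ℕ) (hp : 2 ≤ p)
    (dt : ℕ → ℕ → ℚ)
    (hdt : ∀ n k, dt n k =
      PowerSeries.coeff (p * n + r)
        (d * (PowerSeries.X * h) ^ ((p - 1) * n + r + k))) :
    (∀ n k, dt (n + 1) (k + 1) = ∑ᶠ j : ℕ, PowerSeries.coeff j (A ^ p) * dt n (k + j)) ∧
      ∃ dts hts : PowerSeries ℚ, PowerSeries.constantCoeff hts ≠ 0 ∧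
        hts = (psComp A (PowerSeries.X * hts)) ^ p ∧
        ∀ n k, dt n k = PowerSeries.coeff n (dts * (PowerSeries.X * hts) ^ k) :=
  riordan_array_extraction_general d h A hA0 hhA p r hp dt hdt
end

section
/- Fix an integer p ≥ 1. For an integer x ≥ 1 define the formal power series over ℚ: 𝒞(p, x; t) = Σ_{n≥0} [ 2x/((2p−1)n + 2x) ]·C(2pn + 2x − 1, n)·t^n, and for an integer y ≥ 0 define 𝒟(p, y; t) = Σ_{n≥0} [ ((p−1)n + y + 1)/(pn + y + 1) ]·C(2(pn + y + 1), n)·t^n. Then for all integers x ≥ 1 and y ≥ 0, 𝒞(p, x; t) · 𝒟(p, y; t) = 𝒟(p, x + y; t) as formal power series over ℚ. -/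
/-- The formal power series
`𝒞(p, x; t) = Σ_{n≥0} (2x/((2p−1)n+2x))·C(2pn+2x−1, n)·t^n` over `ℚ`. -/
noncomputable def seriesC (p x : ℕ) : PowerSeries ℚ :=
  PowerSeries.mk fun n =>
    ((2 * (x : ℚ)) / ((2 * (p : ℚ) - 1) * n + 2 * x)) * ((2 * p * n + 2 * x - 1).choose n : ℚ)

/-- The formal power series
`𝒟(p, y; t) = Σ_{n≥0} (((p−1)n+y+1)/(pn+y+1))·C(2(pn+y+1), n)·t^n` over `ℚ`. -/
noncomputable def seriesD (p y : ℕ) : PowerSeries ℚ :=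
  PowerSeries.mk fun n =>
    ((((p : ℚ) - 1) * n + y + 1) / ((p : ℚ) * n + y + 1)) * ((2 * (p * n + y + 1)).choose n : ℚ)


/-!
With `z = 2p`, the Raney numbers `R(z, a, k) = a / (z k + a) * C(z k + a, k)` are the
coefficients of `B(t)^a`, where `B = 1 + t B^z` is the generalized binomial series, and
`𝒞(p, x) = B^(2x)`. Writing `G_b = Σ C(z n + b, n) t^n`, the ballot-type identity
`C(N, n) - C(N, n - 1) = (N + 1 - 2n) / (N + 1) * C(N + 1, n)` gives
`𝒟(p, y) = G_(2y+1) - t G_(2y+1+z)`. The Rothe–Hagen convolution `B^a G_b = G_(a+b)`,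
proved coefficientwise by induction on `n` and `a` from `R(a+1, k+1) = R(a, k+1) + R(a+z, k)`,
then turns `𝒞(p, x) 𝒟(p, y)` into `𝒟(p, x + y)`.
-/

open PowerSeries Finset

/-- The Raney number `a / (z k + a) * C(z k + a, k)` in the division-free form
`C(z k + a, k) - z C(z k + a - 1, k - 1)` (`k ≥ 1`), which also makes sense for `a = 0`. -/
def raney (z a : ℕ) : ℕ → ℤ
  | 0 => 1
  | k + 1 => ((z * (k + 1) + a).choose (k + 1) : ℤ) - z * ((z * (k + 1) + a - 1).choose k)

@[simp] lemma raney_zero_right (z a : ℕ) : raney z a 0 = 1 := rfl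

lemma raney_zero_succ (z k : ℕ) : raney z 0 (k + 1) = 0 := by
  rcases z with _ | z
  · simp [raney]
  · have h := Nat.add_one_mul_choose_eq ((z + 1) * (k + 1) - 1) k
    rw [Nat.sub_add_cancel (Nat.one_le_iff_ne_zero.mpr (by positivity))] at h
    have hchoose :
        ((z + 1) * (k + 1)).choose (k + 1) = (z + 1) * ((z + 1) * (k + 1) - 1).choose k :=
      Nat.eq_of_mul_eq_mul_right (by omega : 0 < k + 1) (by rw [← h]; ring)
    simp [raney, hchoose]

lemma raney_succ_succ (z a k : ℕ) :
    raney z (a + 1) (k + 1) = raney z a (k + 1) + raney z (a + z) k := by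
  rcases k with _ | k
  · simp [raney]
  · obtain ⟨N, hN⟩ : ∃ N, z * (k + 2) + a = N := ⟨_, rfl⟩
    -- Pascal's rule fails for `N = 0`, but then `z = 0`.
    have pascal : (z : ℤ) * N.choose (k + 1) =
        z * ((N - 1).choose k + (N - 1).choose (k + 1)) := by
      rcases N with _ | N
      · obtain rfl : z = 0 := by nlinarith
        simp
      · simp only [Nat.add_sub_cancel, Nat.choose_succ_succ', Nat.cast_add]
    simp only [raney, show z * (k + 1 + 1) + (a + 1) = N + 1 by rw [← hN]; ring,
      show z * (k + 1) + (a + z) = N by rw [← hN]; ring,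
      show z * (k + 1 + 1) + a = N by rw [← hN], Nat.add_sub_cancel, Nat.choose_succ_succ (n := N)]
    push_cast
    linear_combination -pascal

theorem sum_raney_mul_choose (z n a b : ℕ) :
    ∑ ij ∈ antidiagonal n, raney z a ij.1 * ((z * ij.2 + b).choose ij.2 : ℤ) =
      ((z * n + a + b).choose n : ℤ) := by
  induction n generalizing a b with
  | zero => simp
  | succ n ihn =>
    induction a with
    | zero => simp [Nat.sum_antidiagonal_succ, raney_zero_succ]
    | succ a iha =>
      rw [Nat.sum_antidiagonal_succ] at iha ⊢
      simp only [raney_zero_right, raney_succ_succ, add_mul, sum_add_distrib, ihn] at iha ⊢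
      rw [show z * n + (a + z) + b = z * (n + 1) + a + b by ring,
        show z * (n + 1) + (a + 1) + b = z * (n + 1) + a + b + 1 by ring, Nat.choose_succ_succ]
      push_cast
      linear_combination iha

lemma raney_eq_div_mul_choose {K : Type*} [Field K] [CharZero K] {z a : ℕ} (hz : 1 ≤ z)
    (ha : 1 ≤ a) (k : ℕ) :
    (raney z a k : K) = a / ((z - 1 : K) * k + a) * ((z * k + a - 1).choose k : K) := by
  have hD : (z - 1 : K) * k + a ≠ 0 := by
    have hcast : (z - 1 : K) * k + a = (((z - 1) * k + a : ℕ) : K) := by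
      push_cast [Nat.cast_sub hz]; ring
    rw [hcast, Nat.cast_ne_zero]
    omega
  rcases k with _ | j
  · simp [(by simpa using hD : (a : K) ≠ 0)]
  obtain ⟨N, hN⟩ : ∃ N, z * (j + 1) + a = N + 1 :=
    ⟨_, (Nat.succ_pred_eq_of_pos (by positivity)).symm⟩
  have hjN : j ≤ N := by nlinarith
  have hNK : (N : K) = z * (j + 1) + a - 1 := by
    rw [eq_sub_iff_add_eq]; exact_mod_cast hN.symm
  have absorb : ((N.choose (j + 1) * (j + 1) : ℕ) : K) = ((N.choose j * (N - j) : ℕ) : K) :=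
    congrArg _ (Nat.choose_succ_right_eq N j)
  push_cast [Nat.cast_sub hjN, hNK] at absorb
  simp only [raney, hN, Nat.add_sub_cancel, Nat.choose_succ_succ']
  rw [div_mul_eq_mul_div, eq_div_iff hD]
  push_cast
  linear_combination ((z : K) - 1) * absorb

lemma Nat.choose_succ_sub_choose_mul {R : Type*} [CommRing R] (N k : ℕ) :
    ((N.choose (k + 1) : R) - N.choose k) * (N + 1) =
      (N + 1).choose (k + 1) * (N - 2 * k - 1) := by
  have absorb : (((N + 1) * N.choose k : ℕ) : R) = ((N + 1).choose (k + 1) * (k + 1) : ℕ) :=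
    congrArg _ (Nat.add_one_mul_choose_eq N k)
  have pascal : (((N + 1).choose (k + 1) : ℕ) : R) = (N.choose k + N.choose (k + 1) : ℕ) :=
    congrArg _ (Nat.choose_succ_succ' N k)
  push_cast at absorb pascal
  linear_combination -(N + 1 : R) * pascal - 2 * absorb

section PowerSeries

variable (R : Type*) [CommRing R]

def raneySeries (z a : ℕ) : R⟦X⟧ := mk fun k => (raney z a k : R)

def chooseSeries (z b : ℕ) : R⟦X⟧ := mk fun n => ((z * n + b).choose n : R)

theorem raneySeries_mul_chooseSeries (z a b : ℕ) :
    raneySeries R z a * chooseSeries R z b = chooseSeries R z (a + b) := by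
  ext n
  simp only [coeff_mul, raneySeries, chooseSeries, coeff_mk, ← add_assoc]
  exact_mod_cast congrArg (Int.cast : ℤ → R) (sum_raney_mul_choose z n a b)

end PowerSeries

lemma seriesD_eq_sub (p y : ℕ) : seriesD p y =
    chooseSeries ℚ (2 * p) (2 * y + 1) - X * chooseSeries ℚ (2 * p) (2 * y + 1 + 2 * p) := by
  ext (_ | k)
  · simpa [seriesD, chooseSeries] using Nat.cast_add_one_ne_zero (R := ℚ) y
  · rw [map_sub, coeff_succ_X_mul]
    simp only [seriesD, chooseSeries, coeff_mk]
    have ballot := Nat.choose_succ_sub_choose_mul (R := ℚ) (2 * p * (k + 1) + 2 * y + 1) k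
    rw [show 2 * (p * (k + 1) + y + 1) = 2 * p * (k + 1) + 2 * y + 1 + 1 by ring,
      show 2 * p * k + (2 * y + 1 + 2 * p) = 2 * p * (k + 1) + 2 * y + 1 by ring,
      div_mul_eq_mul_div, div_eq_iff (by positivity)]
    push_cast at ballot ⊢
    linear_combination (-1 / 2 : ℚ) * ballot

lemma seriesC_eq_raneySeries {p x : ℕ} (hp : 1 ≤ p) (hx : 1 ≤ x) :
    seriesC p x = raneySeries ℚ (2 * p) (2 * x) := by
  ext n
  rw [seriesC, raneySeries, coeff_mk, coeff_mk, raney_eq_div_mul_choose (by omega) (by omega)]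
  push_cast
  rfl

/-- For integers `p ≥ 1`, `x ≥ 1`, `y ≥ 0`:
`𝒞(p, x; t) · 𝒟(p, y; t) = 𝒟(p, x+y; t)`. -/
theorem seriesC_mul_seriesD (p : ℕ) (hp : 1 ≤ p) (x y : ℕ) (hx : 1 ≤ x) :
    seriesC p x * seriesD p y = seriesD p (x + y) := by
  rw [seriesC_eq_raneySeries hp hx, seriesD_eq_sub, seriesD_eq_sub, mul_sub, mul_left_comm,
    raneySeries_mul_chooseSeries, raneySeries_mul_chooseSeries,
    show 2 * x + (2 * y + 1) = 2 * (x + y) + 1 by ring,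
    show 2 * x + (2 * y + 1 + 2 * p) = 2 * (x + y) + 1 + 2 * p by ring]
end
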